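/- arXiv:math/9601206 — 3 statements merged into one kernel-verified Lean document; each statement's English description precedes it below -/
import Mathlib

section
/- Let H be a complex Hilbert space, A a bounded self-adjoint operator on H, φ ∈ H, λ ∈ ℝ, and let A_λ = A + λ⟨·, φ⟩φ (i.e. A_λψ = Aψ + λ⟨ψ, φ⟩φ). Then for every z ∈ ℂ with Im z > 0, the operators A − z and A_λ − z are boundedly invertible, 1 + λ⟨(A − z)⁻¹φ, φ⟩ ≠ 0, and ⟨(A_λ − z)⁻¹φ, φ⟩ = ⟨(A − z)⁻¹φ, φ⟩ / (1 + λ⟨(A − z)⁻¹φ, φ⟩). -/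
/-!
Both `A` and `A_λ` are self-adjoint, so their spectra are real and contain no `z ∉ ℝ`.
For the formula, put `u = (A_λ - z)⁻¹ φ`. Then `(A - z) u = φ - λ⟨u, φ⟩ φ`, so
`u = (A - z)⁻¹ φ - λ⟨u, φ⟩ (A - z)⁻¹ φ`, and pairing with `φ` gives
`⟨u, φ⟩ (1 + λ⟨(A - z)⁻¹ φ, φ⟩) = ⟨(A - z)⁻¹ φ, φ⟩`. In particular the factor
`1 + λ⟨(A - z)⁻¹ φ, φ⟩` cannot vanish, since otherwise `⟨(A - z)⁻¹ φ, φ⟩ = 0` and the factor is `1`.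
-/

/-- The rank one perturbation `A_λ = A + λ⟨·, φ⟩φ`, i.e. `A_λ ψ = A ψ + λ ⟨ψ, φ⟩ φ`
(here `⟨ψ, φ⟩` is linear in `ψ`; in Mathlib's convention this is `⟪φ, ψ⟫_ℂ`). -/
noncomputable def rankOnePerturb {H : Type*} [NormedAddCommGroup H] [InnerProductSpace ℂ H]
    (A : H →L[ℂ] H) (lam : ℝ) (φ : H) : H →L[ℂ] H :=
  A + (lam : ℂ) • ((innerSL ℂ φ).smulRight φ)

open ContinuousLinearMap

theorem IsSelfAdjoint.isUnit_sub_smul_one {A : Type*} [CStarAlgebra A] {a : A}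
    (ha : IsSelfAdjoint a) {z : ℂ} (hz : z.im ≠ 0) : IsUnit (a - z • (1 : A)) := by
  have hz_notMem : z ∉ spectrum ℂ a := fun hmem => hz (ha.im_eq_zero_of_mem_spectrum hmem)
  rw [spectrum.notMem_iff, Algebra.algebraMap_eq_smul_one] at hz_notMem
  simpa using hz_notMem.neg

section RankOne

variable {𝕜 H : Type*} [RCLike 𝕜] [NormedAddCommGroup H] [InnerProductSpace 𝕜 H]

theorem IsUnit.ring_inverse_apply_apply {U : H →L[𝕜] H} (hU : IsUnit U) (x : H) :
    Ring.inverse U (U x) = x :=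
  DFunLike.congr_fun (Ring.inverse_mul_cancel U hU) x

theorem IsUnit.apply_ring_inverse_apply {U : H →L[𝕜] H} (hU : IsUnit U) (x : H) :
    U (Ring.inverse U x) = x :=
  DFunLike.congr_fun (Ring.mul_inverse_cancel U hU) x

theorem inner_mul_one_add_inner_inverse_of_apply_eq {U V : H →L[𝕜] H} (hU : IsUnit U)
    {c : 𝕜} {φ u : H} (hV : V = U + c • (innerSL 𝕜 φ).smulRight φ) (hu : V u = φ) :
    inner 𝕜 φ u * (1 + c * inner 𝕜 φ (Ring.inverse U φ)) = inner 𝕜 φ (Ring.inverse U φ) := by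
  have hexpand : (U + c • (innerSL 𝕜 φ).smulRight φ) u = U u + (c * inner 𝕜 φ u) • φ := by
    simp only [add_apply, smul_apply, smulRight_apply, innerSL_apply_apply, smul_smul]
  have hUu : U u = φ - (c * inner 𝕜 φ u) • φ := by
    rw [eq_sub_iff_add_eq, ← hexpand, ← hV, hu]
  have hu_eq : u = Ring.inverse U φ - (c * inner 𝕜 φ u) • Ring.inverse U φ := by
    conv_lhs => rw [← hU.ring_inverse_apply_apply u]
    rw [hUu, map_sub, map_smul]
  have hinner := congrArg (inner 𝕜 φ) hu_eq
  rw [inner_sub_right, inner_smul_right] at hinner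
  linear_combination hinner

end RankOne

section Perturbation

variable {H : Type*} [NormedAddCommGroup H] [InnerProductSpace ℂ H]

theorem rankOnePerturb_isSelfAdjoint [CompleteSpace H] {A : H →L[ℂ] H} (hA : IsSelfAdjoint A)
    (lam : ℝ) (φ : H) : IsSelfAdjoint (rankOnePerturb A lam φ) := by
  rw [isSelfAdjoint_iff_isSymmetric] at hA ⊢
  intro x y
  simp only [rankOnePerturb, coe_coe, add_apply, smul_apply, smulRight_apply, innerSL_apply_apply,
    inner_add_left, inner_add_right, inner_smul_left, inner_smul_right, Complex.conj_ofReal]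
  rw [show inner ℂ (A x) y = inner ℂ x (A y) from hA x y, ← inner_conj_symm x φ]
  ring

theorem rankOnePerturb_sub_smul_one (A : H →L[ℂ] H) (lam : ℝ) (φ : H) (z : ℂ) :
    rankOnePerturb A lam φ - z • (1 : H →L[ℂ] H) =
      (A - z • (1 : H →L[ℂ] H)) + (lam : ℂ) • (innerSL ℂ φ).smulRight φ := by
  rw [rankOnePerturb, sub_add_eq_add_sub]

end Perturbation

/-- For a bounded self-adjoint operator `A`, `φ ∈ H`, `λ ∈ ℝ` and `z` in the upper half
plane, `A - z` and `A_λ - z` are boundedly invertible, `1 + λ⟨(A−z)⁻¹φ, φ⟩ ≠ 0`, and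
`⟨(A_λ−z)⁻¹φ, φ⟩ = ⟨(A−z)⁻¹φ, φ⟩ / (1 + λ⟨(A−z)⁻¹φ, φ⟩)`. -/
theorem stmt0 {H : Type*} [NormedAddCommGroup H] [InnerProductSpace ℂ H] [CompleteSpace H]
    (A : H →L[ℂ] H) (hA : IsSelfAdjoint A) (φ : H) (lam : ℝ) (z : ℂ) (hz : 0 < z.im) :
    IsUnit (A - z • (1 : H →L[ℂ] H)) ∧
    IsUnit (rankOnePerturb A lam φ - z • (1 : H →L[ℂ] H)) ∧
    (1 : ℂ) + (lam : ℂ) * (inner ℂ φ (Ring.inverse (A - z • (1 : H →L[ℂ] H)) φ) : ℂ) ≠ 0 ∧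
    (inner ℂ φ (Ring.inverse (rankOnePerturb A lam φ - z • (1 : H →L[ℂ] H)) φ) : ℂ) =
      (inner ℂ φ (Ring.inverse (A - z • (1 : H →L[ℂ] H)) φ) : ℂ) /
        ((1 : ℂ) + (lam : ℂ) * (inner ℂ φ (Ring.inverse (A - z • (1 : H →L[ℂ] H)) φ) : ℂ)) := by
  have hUA := hA.isUnit_sub_smul_one hz.ne'
  have hUB := (rankOnePerturb_isSelfAdjoint hA lam φ).isUnit_sub_smul_one hz.ne'
  have hresolvent := inner_mul_one_add_inner_inverse_of_apply_eq hUA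
    (rankOnePerturb_sub_smul_one A lam φ z) (hUB.apply_ring_inverse_apply φ)
  have hden : (1 : ℂ) + (lam : ℂ) * inner ℂ φ (Ring.inverse (A - z • (1 : H →L[ℂ] H)) φ) ≠ 0 := by
    intro h0
    rw [h0, mul_zero] at hresolvent
    simp [← hresolvent] at h0
  exact ⟨hUA, hUB, hden, (eq_div_iff hden).mpr hresolvent⟩
end

section
/- Let u be the phase shift of the pair (μ, ν) of finite positive compactly supported Borel measures on ℝ. Then for μˢ-almost every x ∈ ℝ one has lim_{ε→0⁺} ∫_{{|t| ≥ ε}} u(x + t)/t dt = +∞, and for νˢ-almost every x ∈ ℝ one has lim_{ε→0⁺} ∫_{{|t| ≥ ε}} u(x + t)/t dt = −∞, where μˢ and νˢ denote the singular parts of μ and ν with respect to Lebesgue measure. -/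
open MeasureTheory Set Filter

/-- The Cauchy transform `𝒦μ(z) = (1/π) ∫ (t - z)⁻¹ dμ(t)` of a positive measure on `ℝ`. -/
noncomputable def cauchyTransform (μ : Measure ℝ) (z : ℂ) : ℂ :=
  (Real.pi : ℂ)⁻¹ * ∫ t, ((t : ℂ) - z)⁻¹ ∂μ

/-- The Cauchy transform of the measure `u(t) dt` for a function `u : ℝ → ℝ`. -/
noncomputable def cauchyTransformFn (u : ℝ → ℝ) (z : ℂ) : ℂ :=
  (Real.pi : ℂ)⁻¹ * ∫ t, (u t : ℂ) * ((t : ℂ) - z)⁻¹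

/-- `u : ℝ → [0, π]` measurable with compact support is the phase shift of the pair
`(μ, ν)` if `1 + π𝒦μ(z) = exp(𝒦u(z)) = (1 − π𝒦ν(z))⁻¹` for all `z ∈ ℂ₊`. -/
def IsPhaseShift (u : ℝ → ℝ) (μ ν : Measure ℝ) : Prop :=
  Measurable u ∧ (∀ x, u x ∈ Icc (0 : ℝ) Real.pi) ∧ HasCompactSupport u ∧
    ∀ z : ℂ, 0 < z.im →
      1 + (Real.pi : ℂ) * cauchyTransform μ z = Complex.exp (cauchyTransformFn u z) ∧
      Complex.exp (cauchyTransformFn u z) = (1 - (Real.pi : ℂ) * cauchyTransform ν z)⁻¹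

/-!
On the vertical line over `x`, `Im (1 + π𝒦μ(x + iε)) = ∫ ε / (ε² + (t - x)²) dμ(t)`, which is at
least `μ[x - ε, x + ε] / (2ε)` and therefore tends to `+∞` at `μˢ`-a.e. `x` (Besicovitch
differentiation of `μˢ` against Lebesgue measure). Taking `log ‖·‖` in `1 + π𝒦μ = exp 𝒦u` gives
`Re 𝒦u(x + iε) → +∞`; dually `Re 𝒦u = -log ‖1 - π𝒦ν‖ → -∞` at `νˢ`-a.e. `x`. Finally
`π Re 𝒦u(x + iε) = ∫ u(x + t) t / (ε² + t²) dt` differs from the truncated integral by at most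
`π²`, since `|1_{|t| ≥ ε} / t - t / (ε² + t²)| ≤ ε / (ε² + t²)`, a kernel of total mass `π`.
-/

open Topology Metric Real

lemma div_sq_add_sq_eq {ε : ℝ} (hε : ε ≠ 0) (t : ℝ) :
    ε / (ε ^ 2 + t ^ 2) = ε⁻¹ * (1 + (t / ε) ^ 2)⁻¹ := by
  field_simp

lemma integrable_div_sq_add_sq {ε : ℝ} (hε : ε ≠ 0) :
    Integrable fun t : ℝ ↦ ε / (ε ^ 2 + t ^ 2) := by
  simp_rw [div_sq_add_sq_eq hε]
  exact (integrable_inv_one_add_sq.comp_div hε).const_mul _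

lemma integral_univ_div_sq_add_sq {ε : ℝ} (hε : 0 < ε) :
    ∫ t : ℝ, ε / (ε ^ 2 + t ^ 2) = π := by
  simp_rw [div_sq_add_sq_eq hε.ne']
  rw [integral_const_mul, Measure.integral_comp_div (fun y ↦ (1 + y ^ 2)⁻¹),
    integral_univ_inv_one_add_sq, smul_eq_mul, abs_of_pos hε]
  field_simp

lemma abs_indicator_inv_sub_div_sq_add_sq_le {ε : ℝ} (hε : 0 < ε) (t : ℝ) :
    |{t : ℝ | ε ≤ |t|}.indicator (·⁻¹) t - t / (ε ^ 2 + t ^ 2)| ≤ ε / (ε ^ 2 + t ^ 2) := by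
  have hpos : 0 < ε ^ 2 + t ^ 2 := by positivity
  by_cases ht : ε ≤ |t|
  · have ht0 : t ≠ 0 := abs_pos.1 (hε.trans_le ht)
    have hdiff : t⁻¹ - t / (ε ^ 2 + t ^ 2) = ε ^ 2 / (t * (ε ^ 2 + t ^ 2)) := by
      field_simp; ring
    rw [indicator_of_mem (show t ∈ {t : ℝ | ε ≤ |t|} from ht), hdiff, abs_div, abs_mul,
      abs_of_pos hpos, abs_of_pos (by positivity), div_le_div_iff₀ (by positivity) hpos]
    have := mul_le_mul_of_nonneg_right ht (by positivity : 0 ≤ ε * (ε ^ 2 + t ^ 2))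
    nlinarith
  · rw [indicator_of_notMem (show t ∉ {t : ℝ | ε ≤ |t|} from ht), zero_sub, abs_neg, abs_div,
      abs_of_pos hpos]
    gcongr
    exact (not_le.1 ht).le

lemma abs_setIntegral_div_sub_integral_mul_le {v : ℝ → ℝ} {C : ℝ} (hv : Integrable v)
    (hC : ∀ t, |v t| ≤ C) {ε : ℝ} (hε : 0 < ε) :
    |(∫ t in {t : ℝ | ε ≤ |t|}, v t / t) - ∫ t, v t * (t / (ε ^ 2 + t ^ 2))| ≤ C * π := by
  have hS : MeasurableSet {t : ℝ | ε ≤ |t|} := measurableSet_le measurable_const measurable_abs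
  have htrunc : ∫ t in {t : ℝ | ε ≤ |t|}, v t / t
      = ∫ t, v t * {t : ℝ | ε ≤ |t|}.indicator (·⁻¹) t := by
    rw [← integral_indicator hS]
    congr 1 with t
    by_cases ht : t ∈ {t : ℝ | ε ≤ |t|} <;> simp [ht, div_eq_mul_inv]
  have hind : Integrable fun t ↦ v t * {t : ℝ | ε ≤ |t|}.indicator (·⁻¹) t := by
    refine hv.mul_bdd (c := ε⁻¹) (measurable_inv.indicator hS).aestronglyMeasurable
      (Eventually.of_forall fun t ↦ ?_)
    by_cases ht : ε ≤ |t|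
    · rw [indicator_of_mem (show t ∈ {t : ℝ | ε ≤ |t|} from ht), norm_inv, Real.norm_eq_abs]
      exact inv_anti₀ hε ht
    · simp [ht, hε.le]
  have hconj : Integrable fun t ↦ v t * (t / (ε ^ 2 + t ^ 2)) := by
    refine hv.mul_bdd (c := ε⁻¹)
      (continuous_id.div (by fun_prop) fun t ↦ by positivity).aestronglyMeasurable
      (Eventually.of_forall fun t ↦ ?_)
    rw [norm_div, Real.norm_eq_abs, Real.norm_of_nonneg (by positivity),
      div_le_iff₀ (by positivity), ← div_eq_inv_mul, le_div_iff₀ hε]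
    nlinarith [sq_abs t, sq_nonneg (|t| - ε)]
  rw [htrunc, ← integral_sub hind hconj, ← Real.norm_eq_abs, ← integral_univ_div_sq_add_sq hε,
    ← integral_const_mul]
  refine norm_integral_le_of_norm_le ((integrable_div_sq_add_sq hε.ne').const_mul C)
    (Eventually.of_forall fun t ↦ ?_)
  rw [← mul_sub, norm_mul, Real.norm_eq_abs, Real.norm_eq_abs]
  exact mul_le_mul (hC t) (abs_indicator_inv_sub_div_sq_add_sq_le hε t) (abs_nonneg _)
    ((abs_nonneg _).trans (hC t))

lemma re_inv_ofReal_sub (t : ℝ) (z : ℂ) :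
    ((t : ℂ) - z)⁻¹.re = (t - z.re) / (z.im ^ 2 + (t - z.re) ^ 2) := by
  rw [Complex.inv_re, Complex.normSq_apply, Complex.sub_re, Complex.sub_im, Complex.ofReal_re,
    Complex.ofReal_im]
  ring

lemma im_inv_ofReal_sub (t : ℝ) (z : ℂ) :
    ((t : ℂ) - z)⁻¹.im = z.im / (z.im ^ 2 + (t - z.re) ^ 2) := by
  rw [Complex.inv_im, Complex.normSq_apply, Complex.sub_re, Complex.sub_im, Complex.ofReal_re,
    Complex.ofReal_im]
  ring

lemma ofReal_pi_mul_cauchyTransform (μ : Measure ℝ) (z : ℂ) :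
    (π : ℂ) * cauchyTransform μ z = ∫ t, ((t : ℂ) - z)⁻¹ ∂μ := by
  rw [cauchyTransform, mul_inv_cancel_left₀ (Complex.ofReal_ne_zero.2 pi_ne_zero)]

lemma ofReal_pi_mul_cauchyTransformFn (u : ℝ → ℝ) (z : ℂ) :
    (π : ℂ) * cauchyTransformFn u z = ∫ t, (u t : ℂ) * ((t : ℂ) - z)⁻¹ := by
  rw [cauchyTransformFn, mul_inv_cancel_left₀ (Complex.ofReal_ne_zero.2 pi_ne_zero)]

section CauchyKernel

variable {z : ℂ}

lemma norm_inv_ofReal_sub_le (hz : 0 < z.im) (t : ℝ) : ‖((t : ℂ) - z)⁻¹‖ ≤ z.im⁻¹ := by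
  rw [norm_inv]
  refine inv_anti₀ hz ?_
  calc z.im = |((t : ℂ) - z).im| := by simp [abs_of_pos hz]
    _ ≤ ‖(t : ℂ) - z‖ := Complex.abs_im_le_norm _

lemma continuous_inv_ofReal_sub (hz : 0 < z.im) : Continuous fun t : ℝ ↦ ((t : ℂ) - z)⁻¹ :=
  (Complex.continuous_ofReal.sub continuous_const).inv₀ fun t h ↦ by
    simpa [hz.ne'] using congrArg Complex.im h

lemma integrable_inv_ofReal_sub (μ : Measure ℝ) [IsFiniteMeasure μ] (hz : 0 < z.im) :
    Integrable (fun t : ℝ ↦ ((t : ℂ) - z)⁻¹) μ :=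
  .of_bound (continuous_inv_ofReal_sub hz).aestronglyMeasurable _
    (Eventually.of_forall (norm_inv_ofReal_sub_le hz))

lemma im_ofReal_pi_mul_cauchyTransform (μ : Measure ℝ) [IsFiniteMeasure μ] (hz : 0 < z.im) :
    ((π : ℂ) * cauchyTransform μ z).im = ∫ t, z.im / (z.im ^ 2 + (t - z.re) ^ 2) ∂μ := by
  rw [ofReal_pi_mul_cauchyTransform, ← RCLike.im_to_complex,
    ← integral_im (integrable_inv_ofReal_sub μ hz)]
  simp only [RCLike.im_to_complex, im_inv_ofReal_sub]

lemma re_ofReal_pi_mul_cauchyTransformFn {u : ℝ → ℝ} (hu : Integrable u) (hz : 0 < z.im) :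
    ((π : ℂ) * cauchyTransformFn u z).re = ∫ t, u (z.re + t) * (t / (z.im ^ 2 + t ^ 2)) := by
  have hint : Integrable fun t : ℝ ↦ (u t : ℂ) * ((t : ℂ) - z)⁻¹ :=
    hu.ofReal.mul_bdd (continuous_inv_ofReal_sub hz).aestronglyMeasurable
      (Eventually.of_forall (norm_inv_ofReal_sub_le hz))
  rw [ofReal_pi_mul_cauchyTransformFn, ← RCLike.re_to_complex, ← integral_re hint,
    ← integral_add_left_eq_self _ z.re]
  simp only [RCLike.re_to_complex, Complex.re_ofReal_mul, re_inv_ofReal_sub, add_sub_cancel_left]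

end CauchyKernel

lemma measureReal_closedBall_div_le_integral (μ : Measure ℝ) [IsFiniteMeasure μ] (x : ℝ)
    {ε : ℝ} (hε : 0 < ε) :
    μ.real (closedBall x ε) / (2 * ε) ≤ ∫ t, ε / (ε ^ 2 + (t - x) ^ 2) ∂μ := by
  have hint : Integrable (fun t ↦ ε / (ε ^ 2 + (t - x) ^ 2)) μ := by
    refine .of_bound (continuous_const.div (by fun_prop) fun t ↦ by positivity).aestronglyMeasurable
      ε⁻¹ (Eventually.of_forall fun t ↦ ?_)
    rw [Real.norm_of_nonneg (by positivity), div_le_iff₀ (by positivity), ← div_eq_inv_mul,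
      le_div_iff₀ hε]
    nlinarith [sq_nonneg (t - x)]
  calc μ.real (closedBall x ε) / (2 * ε) = ∫ t in closedBall x ε, (2 * ε)⁻¹ ∂μ := by
        rw [setIntegral_const, smul_eq_mul, div_eq_mul_inv]
    _ ≤ ∫ t in closedBall x ε, ε / (ε ^ 2 + (t - x) ^ 2) ∂μ := by
        refine setIntegral_mono_on (integrableOn_const (measure_ne_top μ _)) hint.integrableOn
          measurableSet_closedBall fun t ht ↦ ?_
        have : (t - x) ^ 2 ≤ ε ^ 2 := sq_le_sq' (by linarith [(Real.closedBall_eq_Icc ▸ ht).1])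
          (by linarith [(Real.closedBall_eq_Icc ▸ ht).2])
        rw [inv_eq_one_div, div_le_div_iff₀ (by positivity) (by positivity)]
        nlinarith
    _ ≤ ∫ t, ε / (ε ^ 2 + (t - x) ^ 2) ∂μ :=
        setIntegral_le_integral hint (Eventually.of_forall fun t ↦ by positivity)

lemma ae_tendsto_measureReal_closedBall_div_atTop (μ : Measure ℝ) [IsLocallyFiniteMeasure μ] :
    ∀ᵐ x ∂μ.singularPart volume,
      Tendsto (fun ε ↦ μ.real (closedBall x ε) / (2 * ε)) (𝓝[>] 0) atTop := by
  set σ := μ.singularPart volume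
  have hσ : volume.rnDeriv σ =ᵐ[σ] 0 :=
    (Measure.mutuallySingular_singularPart μ volume).symm.rnDeriv_ae_eq_zero
  filter_upwards [Besicovitch.ae_tendsto_rnDeriv volume σ, hσ] with x hx hx0
  rw [hx0, Pi.zero_apply] at hx
  replace hx := tendsto_inv_iff.2 hx
  rw [ENNReal.inv_zero] at hx
  have hσ_div :
      Tendsto (fun ε ↦ σ (closedBall x ε) / ENNReal.ofReal (2 * ε)) (𝓝[>] 0) (𝓝 ⊤) := by
    refine hx.congr' (eventually_mem_nhdsWithin.mono fun ε (hε : 0 < ε) ↦ ?_)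
    rw [Real.volume_closedBall, ENNReal.inv_div (.inr ENNReal.ofReal_ne_top)
      (.inr (by simpa using hε))]
  refine ENNReal.tendsto_ofReal_nhds_top.1 (tendsto_nhds_top_mono hσ_div
    (eventually_mem_nhdsWithin.mono fun ε (hε : 0 < ε) ↦ ?_))
  dsimp only
  rw [ENNReal.ofReal_div_of_pos (by positivity), ofReal_measureReal measure_closedBall_lt_top.ne]
  exact ENNReal.div_le_div_right (Measure.singularPart_le μ volume _) _

lemma ae_tendsto_integral_div_sq_add_sq_atTop (μ : Measure ℝ) [IsFiniteMeasure μ] :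
    ∀ᵐ x ∂μ.singularPart volume,
      Tendsto (fun ε ↦ ∫ t, ε / (ε ^ 2 + (t - x) ^ 2) ∂μ) (𝓝[>] 0) atTop := by
  filter_upwards [ae_tendsto_measureReal_closedBall_div_atTop μ] with x hx
  exact tendsto_atTop_mono' _ (eventually_mem_nhdsWithin.mono fun ε hε ↦
    measureReal_closedBall_div_le_integral μ x hε) hx

lemma Filter.Tendsto.atTop_of_abs_sub_le {α G : Type*} [AddCommGroup G] [LinearOrder G]
    [IsOrderedAddMonoid G] {l : Filter α} {f g : α → G} {C : G} (hg : Tendsto g l atTop)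
    (hfg : ∀ᶠ a in l, |f a - g a| ≤ C) : Tendsto f l atTop :=
  (tendsto_atTop_add_left_of_le' l (-C) (hfg.mono fun _ h ↦ neg_le_of_abs_le h) hg).congr
    fun _ ↦ sub_add_cancel _ _

lemma Filter.Tendsto.atBot_of_abs_sub_le {α G : Type*} [AddCommGroup G] [LinearOrder G]
    [IsOrderedAddMonoid G] {l : Filter α} {f g : α → G} {C : G} (hg : Tendsto g l atBot)
    (hfg : ∀ᶠ a in l, |f a - g a| ≤ C) : Tendsto f l atBot :=
  (tendsto_atBot_add_left_of_ge' l C (hfg.mono fun _ h ↦ le_of_abs_le h) hg).congr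
    fun _ ↦ sub_add_cancel _ _

namespace IsPhaseShift

variable {u : ℝ → ℝ} {μ ν : Measure ℝ}

lemma abs_le_pi (hu : IsPhaseShift u μ ν) (t : ℝ) : |u t| ≤ π :=
  abs_le.2 ⟨by linarith [(hu.2.1 t).1, pi_pos], (hu.2.1 t).2⟩

lemma integrable (hu : IsPhaseShift u μ ν) : Integrable u := by
  rw [← integrableOn_iff_integrable_of_support_subset (subset_tsupport u)]
  exact .of_bound hu.2.2.1.isCompact.measure_lt_top hu.1.aestronglyMeasurable π
    (Eventually.of_forall hu.abs_le_pi)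

lemma re_cauchyTransformFn_eq_log_norm_one_add (hu : IsPhaseShift u μ ν) {z : ℂ}
    (hz : 0 < z.im) : (cauchyTransformFn u z).re = log ‖1 + π * cauchyTransform μ z‖ := by
  rw [(hu.2.2.2 z hz).1, Complex.norm_exp, log_exp]

lemma re_cauchyTransformFn_eq_neg_log_norm_one_sub (hu : IsPhaseShift u μ ν) {z : ℂ}
    (hz : 0 < z.im) : (cauchyTransformFn u z).re = -log ‖1 - π * cauchyTransform ν z‖ := by
  rw [← log_inv, ← norm_inv, ← (hu.2.2.2 z hz).2, Complex.norm_exp, log_exp]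

lemma abs_setIntegral_div_sub_re_cauchyTransformFn_le (hu : IsPhaseShift u μ ν) (x : ℝ)
    {ε : ℝ} (hε : 0 < ε) :
    |(∫ t in {t : ℝ | ε ≤ |t|}, u (x + t) / t)
        - π * (cauchyTransformFn u (x + ε * Complex.I)).re| ≤ π * π := by
  have hz : 0 < (x + ε * Complex.I).im := by simpa using hε
  rw [← Complex.re_ofReal_mul, re_ofReal_pi_mul_cauchyTransformFn hu.integrable hz]
  simpa using abs_setIntegral_div_sub_integral_mul_le (hu.integrable.comp_add_left x)
    (fun t ↦ hu.abs_le_pi (x + t)) hε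

lemma tendsto_re_cauchyTransformFn_atTop [IsFiniteMeasure μ] (hu : IsPhaseShift u μ ν) {x : ℝ}
    (hx : Tendsto (fun ε ↦ ∫ t, ε / (ε ^ 2 + (t - x) ^ 2) ∂μ) (𝓝[>] 0) atTop) :
    Tendsto (fun ε : ℝ ↦ (cauchyTransformFn u (x + ε * Complex.I)).re) (𝓝[>] 0) atTop := by
  have hnorm :
      Tendsto (fun ε : ℝ ↦ ‖1 + π * cauchyTransform μ (x + ε * Complex.I)‖) (𝓝[>] 0) atTop := by
    refine tendsto_atTop_mono' _ (eventually_mem_nhdsWithin.mono fun ε (hε : 0 < ε) ↦ ?_) hx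
    have hz : 0 < (x + ε * Complex.I).im := by simpa using hε
    refine le_of_eq_of_le ?_ (Complex.im_le_norm _)
    simp [im_ofReal_pi_mul_cauchyTransform μ hz]
  refine (tendsto_log_atTop.comp hnorm).congr' (eventually_mem_nhdsWithin.mono fun ε hε ↦ ?_)
  exact (hu.re_cauchyTransformFn_eq_log_norm_one_add (z := x + ε * Complex.I)
    (by simpa using hε)).symm

lemma tendsto_re_cauchyTransformFn_atBot [IsFiniteMeasure ν] (hu : IsPhaseShift u μ ν) {x : ℝ}
    (hx : Tendsto (fun ε ↦ ∫ t, ε / (ε ^ 2 + (t - x) ^ 2) ∂ν) (𝓝[>] 0) atTop) :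
    Tendsto (fun ε : ℝ ↦ (cauchyTransformFn u (x + ε * Complex.I)).re) (𝓝[>] 0) atBot := by
  have hnorm :
      Tendsto (fun ε : ℝ ↦ ‖1 - π * cauchyTransform ν (x + ε * Complex.I)‖) (𝓝[>] 0) atTop := by
    refine tendsto_atTop_mono' _ (eventually_mem_nhdsWithin.mono fun ε (hε : 0 < ε) ↦ ?_) hx
    have hz : 0 < (x + ε * Complex.I).im := by simpa using hε
    refine le_of_eq_of_le ?_ ((neg_le_abs _).trans (Complex.abs_im_le_norm _))
    simp [im_ofReal_pi_mul_cauchyTransform ν hz]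
  refine (tendsto_neg_atTop_atBot.comp (tendsto_log_atTop.comp hnorm)).congr'
    (eventually_mem_nhdsWithin.mono fun ε hε ↦ ?_)
  exact (hu.re_cauchyTransformFn_eq_neg_log_norm_one_sub (z := x + ε * Complex.I)
    (by simpa using hε)).symm

end IsPhaseShift

theorem stmt4_general (μ ν : Measure ℝ) [IsFiniteMeasure μ] [IsFiniteMeasure ν]
    (u : ℝ → ℝ) (hu : IsPhaseShift u μ ν) :
    (∀ᵐ x ∂(μ.singularPart volume),
      Tendsto (fun ε : ℝ => ∫ t in {t : ℝ | ε ≤ |t|}, u (x + t) / t)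
        (nhdsWithin 0 (Ioi 0)) atTop) ∧
    (∀ᵐ x ∂(ν.singularPart volume),
      Tendsto (fun ε : ℝ => ∫ t in {t : ℝ | ε ≤ |t|}, u (x + t) / t)
        (nhdsWithin 0 (Ioi 0)) atBot) := by
  have htrunc (x : ℝ) := (eventually_mem_nhdsWithin (a := 0) (s := Ioi 0)).mono
    fun ε (hε : 0 < ε) ↦ hu.abs_setIntegral_div_sub_re_cauchyTransformFn_le x hε
  refine ⟨?_, ?_⟩
  · filter_upwards [ae_tendsto_integral_div_sq_add_sq_atTop μ] with x hx
    exact ((hu.tendsto_re_cauchyTransformFn_atTop hx).const_mul_atTop pi_pos).atTop_of_abs_sub_le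
      (htrunc x)
  · filter_upwards [ae_tendsto_integral_div_sq_add_sq_atTop ν] with x hx
    exact ((hu.tendsto_re_cauchyTransformFn_atBot hx).const_mul_atBot pi_pos).atBot_of_abs_sub_le
      (htrunc x)

/-- If `u` is the phase shift of `(μ, ν)` then for `μˢ`-a.e. `x` the principal value
`p.v.∫ u(x+t)/t dt = +∞` and for `νˢ`-a.e. `x` it is `−∞`, where `μˢ`, `νˢ` are the
singular parts with respect to Lebesgue measure. -/
theorem stmt4 (μ ν : Measure ℝ) [IsFiniteMeasure μ] [IsFiniteMeasure ν]
    (hμsupp : ∃ R : ℝ, μ (Icc (-R) R)ᶜ = 0) (hνsupp : ∃ R : ℝ, ν (Icc (-R) R)ᶜ = 0)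
    (u : ℝ → ℝ) (hu : IsPhaseShift u μ ν) :
    (∀ᵐ x ∂(μ.singularPart volume),
      Tendsto (fun ε : ℝ => ∫ t in {t : ℝ | ε ≤ |t|}, u (x + t) / t)
        (nhdsWithin 0 (Ioi 0)) atTop) ∧
    (∀ᵐ x ∂(ν.singularPart volume),
      Tendsto (fun ε : ℝ => ∫ t in {t : ℝ | ε ≤ |t|}, u (x + t) / t)
        (nhdsWithin 0 (Ioi 0)) atBot) :=
  stmt4_general μ ν u hu
end

section
/- Let (a_n) and (b_n) be injective sequences of real numbers contained in a bounded set, with {a_n : n} ∩ {b_n : n} = ∅, let α_n, β_n > 0 with Σα_n < ∞ and Σβ_n < ∞, and set μ = Σ_n α_n δ_{a_n} and ν = Σ_n β_n δ_{b_n}. If the multiplication operators M_μ and M_ν are equivalent up to a rank one perturbation, then the sets {a_n : n} and {b_n : n} are well-mixed. -/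
open MeasureTheory Set

/-- Two bounded operators on (possibly different) complex Hilbert spaces are unitarily
equivalent. -/
def UnitarilyEquiv {H₁ : Type*} [NormedAddCommGroup H₁] [InnerProductSpace ℂ H₁]
    {H₂ : Type*} [NormedAddCommGroup H₂] [InnerProductSpace ℂ H₂]
    (A : H₁ →L[ℂ] H₁) (B : H₂ →L[ℂ] H₂) : Prop :=
  ∃ U : H₁ ≃ₗᵢ[ℂ] H₂, ∀ x, U (A x) = B (U x)

/-- Two bounded operators `A`, `B` are equivalent up to a rank one perturbation: there
are operators `A'`, `B'` on one Hilbert space, unitarily equivalent to `A` resp. `B`,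
with `A' − B'` of rank exactly one. -/
def EquivUpToRankOne {H₁ : Type*} [NormedAddCommGroup H₁] [InnerProductSpace ℂ H₁]
    {H₂ : Type*} [NormedAddCommGroup H₂] [InnerProductSpace ℂ H₂]
    (A : H₁ →L[ℂ] H₁) (B : H₂ →L[ℂ] H₂) : Prop :=
  ∃ A' B' : H₁ →L[ℂ] H₁, UnitarilyEquiv A A' ∧ UnitarilyEquiv B B' ∧
    Module.finrank ℂ (LinearMap.range ((A' - B' : H₁ →L[ℂ] H₁) : H₁ →ₗ[ℂ] H₁)) = 1

/-- Two (disjoint) sets of reals are well-mixed: strictly between any two points of one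
set, and outside the closed interval they bound, there is a point of the other set. -/
def WellMixed (𝒜 ℬ : Set ℝ) : Prop :=
  (∀ x ∈ 𝒜, ∀ y ∈ 𝒜, x < y →
    (Ioo x y ∩ ℬ).Nonempty ∧ ((Icc x y)ᶜ ∩ ℬ).Nonempty) ∧
  (∀ x ∈ ℬ, ∀ y ∈ ℬ, x < y →
    (Ioo x y ∩ 𝒜).Nonempty ∧ ((Icc x y)ᶜ ∩ 𝒜).Nonempty)

/-! Let `x < y` be atoms of `μ`, `c` their midpoint and `r = (y - x) / 2`. The rank one
difference `A' - B'` kills a nonzero vector of the two-dimensional span of the indicators of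
`x` and `y`, i.e. `A' (U f) = B' (U f)` for some `f ≠ 0` supported on `{x, y}`, and for such `f`
we have `‖(M_μ - c) f‖ = r ‖f‖`. Transported to `L²(ν)` this gives `g ≠ 0` with
`‖(M_ν - c) g‖ = r ‖g‖`. If `ν` had no atom in `(x, y)`, then `|t - c| > r` for `ν`-a.e. `t` and
the left side would be strictly larger; if it had none outside `[x, y]`, strictly smaller.
Swapping `μ` and `ν` gives the other half of well-mixedness. -/

open Filter
open scoped ENNReal

theorem LinearMap.exists_smul_add_smul_eq_zero_of_finrank_range_eq_one {K V W : Type*} [Field K]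
    [AddCommGroup V] [Module K V] [AddCommGroup W] [Module K W] (T : V →ₗ[K] W)
    (hT : Module.finrank K (LinearMap.range T) = 1) (u v : V) :
    ∃ s t : K, (s ≠ 0 ∨ t ≠ 0) ∧ T (s • u + t • v) = 0 := by
  have : Module.Finite K (LinearMap.range T) := Module.finite_of_finrank_eq_succ hT
  have hdep : ¬LinearIndependent K ![(⟨T u, u, rfl⟩ : LinearMap.range T), ⟨T v, v, rfl⟩] :=
    fun h => by simpa [hT] using h.fintype_card_le_finrank
  simp only [LinearIndependent.pair_iff, not_forall, not_and_or] at hdep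
  obtain ⟨s, t, hst, hne⟩ := hdep
  refine ⟨s, t, hne, ?_⟩
  simpa using congrArg Subtype.val hst

theorem MeasureTheory.Lp.norm_lt_norm_of_ae_le_of_frequently_lt {α E : Type*} [MeasurableSpace α]
    {μ : Measure α} [NormedAddCommGroup E] {p : ℝ≥0∞} (hp0 : p ≠ 0) (hp : p ≠ ∞)
    {f g : Lp E p μ} (hle : ∀ᵐ t ∂μ, ‖f t‖ ≤ ‖g t‖) (hlt : ∃ᵐ t ∂μ, ‖f t‖ < ‖g t‖) :
    ‖f‖ < ‖g‖ := by
  have hp_pos : 0 < p.toReal := ENNReal.toReal_pos hp0 hp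
  rw [Lp.norm_def, Lp.norm_def,
    ENNReal.toReal_lt_toReal (Lp.eLpNorm_ne_top f) (Lp.eLpNorm_ne_top g),
    eLpNorm_eq_lintegral_rpow_enorm_toReal hp0 hp, eLpNorm_eq_lintegral_rpow_enorm_toReal hp0 hp]
  refine ENNReal.rpow_lt_rpow (lintegral_strict_mono_of_ae_le_of_frequently_ae_lt ?_ ?_ ?_ ?_)
    (by positivity)
  · exact (Lp.aestronglyMeasurable g).enorm.pow_const _
  · exact lintegral_rpow_enorm_lt_top_of_eLpNorm_lt_top hp0 hp (Lp.eLpNorm_lt_top f) |>.ne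
  · filter_upwards [hle] with t ht
    gcongr
    exact enorm_le_iff_norm_le.mpr ht
  · refine hlt.mono fun t ht => (ENNReal.rpow_lt_rpow ?_ hp_pos).ne
    rw [← ofReal_norm, ← ofReal_norm]
    exact (ENNReal.ofReal_lt_ofReal_iff_of_nonneg (norm_nonneg _)).mpr ht

theorem MeasureTheory.Lp.norm_lt_norm_of_ae_norm_eq_mul {α E : Type*} [MeasurableSpace α]
    {μ : Measure α} [NormedAddCommGroup E] {p : ℝ≥0∞} (hp0 : p ≠ 0) (hp : p ≠ ∞)
    {F G u : Lp E p μ} {φ ψ : α → ℝ} (hF : ∀ᵐ t ∂μ, ‖F t‖ = φ t * ‖u t‖)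
    (hG : ∀ᵐ t ∂μ, ‖G t‖ = ψ t * ‖u t‖) (hφψ : ∀ᵐ t ∂μ, φ t < ψ t) (hu : u ≠ 0) :
    ‖F‖ < ‖G‖ := by
  have hu' : ∃ᵐ t ∂μ, u t ≠ 0 := by
    simpa [Filter.EventuallyEq, Lp.eq_zero_iff_ae_eq_zero, Filter.not_eventually] using hu
  refine Lp.norm_lt_norm_of_ae_le_of_frequently_lt hp0 hp ?_ ?_
  · filter_upwards [hF, hG, hφψ] with t hFt hGt ht
    rw [hFt, hGt]
    exact mul_le_mul_of_nonneg_right ht.le (norm_nonneg _)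
  · refine (hu'.and_eventually (hF.and (hG.and hφψ))).mono ?_
    rintro t ⟨hut, hFt, hGt, ht⟩
    rw [hFt, hGt]
    exact mul_lt_mul_of_pos_right ht (norm_pos_iff.mpr hut)

theorem Filter.Eventually.self_of_measure_singleton_ne_zero {α : Type*} [MeasurableSpace α]
    {μ : Measure α} {P : α → Prop} (h : ∀ᵐ τ ∂μ, P τ) {x : α} (hx : μ {x} ≠ 0) : P x := by
  obtain ⟨τ, rfl, hτ⟩ := ((frequently_ae_mem_iff.2 hx).and_eventually h).exists
  exact hτ

theorem MeasureTheory.Lp.exists_ne_zero_map_eq_zero_of_finrank_range_eq_one {α 𝕜 W : Type*}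
    [MeasurableSpace α] [MeasurableSingletonClass α] {μ : Measure α} [NormedField 𝕜]
    {p : ℝ≥0∞} [AddCommGroup W] [Module 𝕜 W]
    (T : Lp 𝕜 p μ →ₗ[𝕜] W) (hT : Module.finrank 𝕜 (LinearMap.range T) = 1) {x y : α}
    (hxy : x ≠ y) (hx : μ {x} ≠ 0) (hx' : μ {x} ≠ ∞) (hy : μ {y} ≠ 0) (hy' : μ {y} ≠ ∞) :
    ∃ f : Lp 𝕜 p μ, f ≠ 0 ∧ (∀ᵐ τ ∂μ, f τ ≠ 0 → τ = x ∨ τ = y) ∧ T f = 0 := by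
  set ex := indicatorConstLp p (measurableSet_singleton x) hx' (1 : 𝕜)
  set ey := indicatorConstLp p (measurableSet_singleton y) hy' (1 : 𝕜)
  obtain ⟨s, t, hst, hT0⟩ := T.exists_smul_add_smul_eq_zero_of_finrank_range_eq_one hT ex ey
  have hf : ∀ᵐ τ ∂μ, (s • ex + t • ey) τ
      = s * ({x} : Set α).indicator 1 τ + t * ({y} : Set α).indicator 1 τ := by
    filter_upwards [Lp.coeFn_add (s • ex) (t • ey), Lp.coeFn_smul s ex, Lp.coeFn_smul t ey,
      indicatorConstLp_coeFn (hs := measurableSet_singleton x) (hμs := hx') (c := (1 : 𝕜)),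
      indicatorConstLp_coeFn (hs := measurableSet_singleton y) (hμs := hy') (c := (1 : 𝕜))]
      with τ hadd hsx hty hex hey
    rw [hadd, Pi.add_apply, hsx, hty, Pi.smul_apply, Pi.smul_apply, hex, hey]
    rfl
  refine ⟨s • ex + t • ey, fun h0 => ?_, ?_, hT0⟩
  · have hz : ∀ᵐ τ ∂μ, s * ({x} : Set α).indicator 1 τ + t * ({y} : Set α).indicator 1 τ = 0 := by
      filter_upwards [hf, Lp.eq_zero_iff_ae_eq_zero.mp h0] with τ hτ h0τ
      rw [← hτ, h0τ, Pi.zero_apply]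
    have hs := hz.self_of_measure_singleton_ne_zero hx
    have ht := hz.self_of_measure_singleton_ne_zero hy
    simp only [mem_singleton_iff, indicator_of_mem, indicator_of_notMem, hxy, hxy.symm,
      not_false_eq_true, Pi.one_apply, mul_one, mul_zero, add_zero, zero_add] at hs ht
    exact hst.elim (· hs) (· ht)
  · filter_upwards [hf] with τ hτ hne
    rw [hτ] at hne
    by_contra! hτxy
    simp [hτxy.1, hτxy.2] at hne

section DiscreteMeasure

variable {α ι : Type*} [MeasurableSpace α] [MeasurableSingletonClass α] {a : ι → α}
  {w : ι → NNReal}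

theorem MeasureTheory.Measure.sum_smul_dirac_apply_singleton (ha : Function.Injective a) (i : ι) :
    (Measure.sum fun n => (w n : ℝ≥0∞) • Measure.dirac (a n)) {a i} = w i := by
  rw [Measure.sum_apply _ (measurableSet_singleton _), tsum_eq_single i]
  · simp
  · intro n hn
    simp [ha.ne hn]

theorem MeasureTheory.Measure.ae_mem_range_sum_smul_dirac [Countable ι] :
    ∀ᵐ t ∂(Measure.sum fun n => (w n : ℝ≥0∞) • Measure.dirac (a n)), t ∈ range a := by
  rw [Measure.ae_sum_iff]
  exact fun n => Measure.ae_smul_measure (by rw [ae_dirac_eq]; exact ⟨n, rfl⟩) _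

theorem MeasureTheory.Measure.sum_smul_dirac_singleton_ne_zero_and_ne_top
    (ha : Function.Injective a) (hw : ∀ n, 0 < w n) :
    ∀ x ∈ range a, (Measure.sum fun n => (w n : ℝ≥0∞) • Measure.dirac (a n)) {x} ≠ 0 ∧
      (Measure.sum fun n => (w n : ℝ≥0∞) • Measure.dirac (a n)) {x} ≠ ∞ := by
  rintro x ⟨i, rfl⟩
  rw [Measure.sum_smul_dirac_apply_singleton ha]
  exact ⟨ENNReal.coe_ne_zero.mpr (hw i).ne', ENNReal.coe_ne_top⟩

end DiscreteMeasure

section MultiplicationOperator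

variable {μ : Measure ℝ} {M : Lp ℂ 2 μ →L[ℂ] Lp ℂ 2 μ}

theorem ae_norm_mul_sub_smul (hM : ∀ f : Lp ℂ 2 μ, ∀ᵐ t ∂μ, M f t = t * f t)
    (f : Lp ℂ 2 μ) (c : ℝ) : ∀ᵐ t ∂μ, ‖(M f - (c : ℂ) • f) t‖ = |t - c| * ‖f t‖ := by
  filter_upwards [Lp.coeFn_sub (M f) ((c : ℂ) • f), Lp.coeFn_smul (c : ℂ) f, hM f]
    with t hsub hsmul hMt
  rw [hsub, Pi.sub_apply, hsmul, hMt, Pi.smul_apply, smul_eq_mul, ← sub_mul, ← Complex.ofReal_sub,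
    norm_mul, Complex.norm_real, Real.norm_eq_abs]

theorem norm_mul_sub_smul_of_ae_abs_sub_eq (hM : ∀ f : Lp ℂ 2 μ, ∀ᵐ t ∂μ, M f t = t * f t)
    {f : Lp ℂ 2 μ} {c r : ℝ} (hr : 0 ≤ r) (hf : ∀ᵐ t ∂μ, f t ≠ 0 → |t - c| = r) :
    ‖M f - (c : ℂ) • f‖ = r * ‖f‖ := by
  rw [← norm_smul_of_nonneg hr, Lp.norm_def, Lp.norm_def]
  congr 1
  refine eLpNorm_congr_norm_ae ?_
  filter_upwards [ae_norm_mul_sub_smul hM f c, Lp.coeFn_smul r f, hf] with t ht hsmul hft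
  rw [ht, hsmul, Pi.smul_apply, norm_smul_of_nonneg hr]
  by_cases h0 : f t = 0
  · simp [h0]
  · rw [hft h0]

theorem frequently_abs_sub_le_and_ge_of_norm_mul_sub_smul
    (hM : ∀ f : Lp ℂ 2 μ, ∀ᵐ t ∂μ, M f t = t * f t) {g : Lp ℂ 2 μ} (hg : g ≠ 0) {c r : ℝ}
    (hr : 0 ≤ r) (hnorm : ‖M g - (c : ℂ) • g‖ = r * ‖g‖) :
    (∃ᵐ t ∂μ, |t - c| ≤ r) ∧ ∃ᵐ t ∂μ, r ≤ |t - c| := by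
  have hrg : ∀ᵐ t ∂μ, ‖(r • g) t‖ = r * ‖g t‖ := by
    filter_upwards [Lp.coeFn_smul r g] with t ht
    rw [ht, Pi.smul_apply, norm_smul_of_nonneg hr]
  rw [← norm_smul_of_nonneg hr] at hnorm
  have hMg := ae_norm_mul_sub_smul hM g c
  constructor
  · by_contra hfar
    simp only [Filter.not_frequently, not_le] at hfar
    exact (Lp.norm_lt_norm_of_ae_norm_eq_mul two_ne_zero ENNReal.ofNat_ne_top hrg hMg hfar hg).ne'
      hnorm
  · by_contra hnear
    simp only [Filter.not_frequently, not_le] at hnear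
    exact (Lp.norm_lt_norm_of_ae_norm_eq_mul two_ne_zero ENNReal.ofNat_ne_top hMg hrg hnear hg).ne
      hnorm

end MultiplicationOperator

theorem frequently_mem_Icc_and_notMem_Ioo_of_unitarilyEquiv {H : Type*} [NormedAddCommGroup H]
    [InnerProductSpace ℂ H] {μ ν : Measure ℝ} {Mμ : Lp ℂ 2 μ →L[ℂ] Lp ℂ 2 μ}
    (hMμ : ∀ f : Lp ℂ 2 μ, ∀ᵐ t ∂μ, Mμ f t = t * f t) {Mν : Lp ℂ 2 ν →L[ℂ] Lp ℂ 2 ν}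
    (hMν : ∀ g : Lp ℂ 2 ν, ∀ᵐ t ∂ν, Mν g t = t * g t) {A B : H →L[ℂ] H}
    (hA : UnitarilyEquiv Mμ A) (hB : UnitarilyEquiv Mν B)
    (hAB : Module.finrank ℂ (LinearMap.range ((A - B : H →L[ℂ] H) : H →ₗ[ℂ] H)) = 1)
    {x y : ℝ} (hxy : x < y) (hx : μ {x} ≠ 0) (hx' : μ {x} ≠ ∞) (hy : μ {y} ≠ 0)
    (hy' : μ {y} ≠ ∞) :
    (∃ᵐ t ∂ν, t ∈ Icc x y) ∧ ∃ᵐ t ∂ν, t ∉ Ioo x y := by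
  obtain ⟨U, hU⟩ := hA
  obtain ⟨V, hV⟩ := hB
  have hrange : LinearMap.range (((A - B : H →L[ℂ] H) : H →ₗ[ℂ] H) ∘ₗ (U : Lp ℂ 2 μ →ₗ[ℂ] H))
      = LinearMap.range ((A - B : H →L[ℂ] H) : H →ₗ[ℂ] H) :=
    LinearMap.range_comp_of_range_eq_top _ U.toLinearEquiv.range
  obtain ⟨f, hf0, hf_supp, hABf⟩ := Lp.exists_ne_zero_map_eq_zero_of_finrank_range_eq_one _
    (hrange ▸ hAB) hxy.ne hx hx' hy hy'
  have hABf' : A (U f) = B (U f) := by simpa [sub_eq_zero] using hABf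
  set c := (x + y) / 2 with hc
  set r := (y - x) / 2 with hr_def
  have hr : 0 ≤ r := by linarith
  have hfnorm : ‖Mμ f - (c : ℂ) • f‖ = r * ‖f‖ := by
    refine norm_mul_sub_smul_of_ae_abs_sub_eq hMμ hr (hf_supp.mono fun t ht hft => ?_)
    rcases ht hft with rfl | rfl
    · rw [abs_of_nonpos (by linarith)]; ring
    · rw [abs_of_nonneg (by linarith)]; ring
  set g := V.symm (U f)
  have hg0 : g ≠ 0 := by simpa [g] using hf0
  have hgnorm : ‖Mν g - (c : ℂ) • g‖ = r * ‖g‖ := calc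
    ‖Mν g - (c : ℂ) • g‖ = ‖B (U f) - (c : ℂ) • U f‖ := by
      rw [← V.norm_map, map_sub, map_smul, hV, V.apply_symm_apply]
    _ = ‖U (Mμ f - (c : ℂ) • f)‖ := by
      rw [map_sub, map_smul, hU, hABf']
    _ = r * ‖g‖ := by rw [U.norm_map, hfnorm, V.symm.norm_map, U.norm_map]
  obtain ⟨hnear, hfar⟩ := frequently_abs_sub_le_and_ge_of_norm_mul_sub_smul hMν hg0 hr hgnorm
  refine ⟨hnear.mono fun t ht => ?_, hfar.mono fun t ht hIoo => ?_⟩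
  · obtain ⟨h₁, h₂⟩ := abs_sub_le_iff.mp ht
    constructor <;> linarith
  · obtain ⟨h₁, h₂⟩ := hIoo
    have : |t - c| < r := abs_sub_lt_iff.mpr ⟨by linarith, by linarith⟩
    linarith

theorem nonempty_Ioo_inter_and_compl_Icc_inter_of_unitarilyEquiv {H : Type*} [NormedAddCommGroup H]
    [InnerProductSpace ℂ H] {μ ν : Measure ℝ} {Mμ : Lp ℂ 2 μ →L[ℂ] Lp ℂ 2 μ}
    (hMμ : ∀ f : Lp ℂ 2 μ, ∀ᵐ t ∂μ, Mμ f t = t * f t) {Mν : Lp ℂ 2 ν →L[ℂ] Lp ℂ 2 ν}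
    (hMν : ∀ g : Lp ℂ 2 ν, ∀ᵐ t ∂ν, Mν g t = t * g t) {A B : H →L[ℂ] H}
    (hA : UnitarilyEquiv Mμ A) (hB : UnitarilyEquiv Mν B)
    (hAB : Module.finrank ℂ (LinearMap.range ((A - B : H →L[ℂ] H) : H →ₗ[ℂ] H)) = 1)
    {𝒜 ℬ : Set ℝ} (h𝒜 : ∀ x ∈ 𝒜, μ {x} ≠ 0 ∧ μ {x} ≠ ∞) (hℬ : ∀ᵐ t ∂ν, t ∈ ℬ)
    (hdisj : Disjoint 𝒜 ℬ) :
    ∀ x ∈ 𝒜, ∀ y ∈ 𝒜, x < y → (Ioo x y ∩ ℬ).Nonempty ∧ ((Icc x y)ᶜ ∩ ℬ).Nonempty := by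
  intro x hx y hy hxy
  obtain ⟨hnear, hfar⟩ := frequently_mem_Icc_and_notMem_Ioo_of_unitarilyEquiv hMμ hMν hA hB hAB
    hxy (h𝒜 x hx).1 (h𝒜 x hx).2 (h𝒜 y hy).1 (h𝒜 y hy).2
  obtain ⟨t, htIcc, htℬ⟩ := (hnear.and_eventually hℬ).exists
  obtain ⟨s, hsIoo, hsℬ⟩ := (hfar.and_eventually hℬ).exists
  have hne : ∀ z ∈ ℬ, z ≠ x ∧ z ≠ y := fun z hz =>
    ⟨fun h => hdisj.ne_of_mem hx hz h.symm, fun h => hdisj.ne_of_mem hy hz h.symm⟩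
  refine ⟨⟨t, ⟨htIcc.1.lt_of_ne (hne t htℬ).1.symm, htIcc.2.lt_of_ne (hne t htℬ).2⟩, htℬ⟩,
    ⟨s, fun hsIcc => hsIoo ?_, hsℬ⟩⟩
  exact ⟨hsIcc.1.lt_of_ne (hne s hsℬ).1.symm, hsIcc.2.lt_of_ne (hne s hsℬ).2⟩

theorem stmt16_general (a b : ℕ → ℝ)
    (hainj : Function.Injective a) (hbinj : Function.Injective b)
    (hdisj : Disjoint (Set.range a) (Set.range b))
    (α β : ℕ → NNReal) (hα : ∀ n, 0 < α n) (hβ : ∀ n, 0 < β n)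
    (μ ν : Measure ℝ)
    (hμ : μ = Measure.sum fun n => ((α n : ENNReal) • Measure.dirac (a n)))
    (hν : ν = Measure.sum fun n => ((β n : ENNReal) • Measure.dirac (b n)))
    (Mμ : Lp ℂ 2 μ →L[ℂ] Lp ℂ 2 μ)
    (hMμ : ∀ f : Lp ℂ 2 μ, ∀ᵐ (t : ℝ) ∂μ, (Mμ f) t = (t : ℂ) * f t)
    (Mν : Lp ℂ 2 ν →L[ℂ] Lp ℂ 2 ν)
    (hMν : ∀ f : Lp ℂ 2 ν, ∀ᵐ (t : ℝ) ∂ν, (Mν f) t = (t : ℂ) * f t)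
    (h : EquivUpToRankOne Mμ Mν) :
    WellMixed (Set.range a) (Set.range b) := by
  obtain ⟨A', B', hA, hB, hrank⟩ := h
  have hrank' : Module.finrank ℂ
      (LinearMap.range ((B' - A' : Lp ℂ 2 μ →L[ℂ] Lp ℂ 2 μ) : Lp ℂ 2 μ →ₗ[ℂ] Lp ℂ 2 μ)) = 1 := by
    rwa [← neg_sub, ContinuousLinearMap.toLinearMap_neg, LinearMap.range_neg]
  subst hμ hν
  exact ⟨nonempty_Ioo_inter_and_compl_Icc_inter_of_unitarilyEquiv hMμ hMν hA hB hrank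
      (Measure.sum_smul_dirac_singleton_ne_zero_and_ne_top hainj hα)
      Measure.ae_mem_range_sum_smul_dirac hdisj,
    nonempty_Ioo_inter_and_compl_Icc_inter_of_unitarilyEquiv hMν hMμ hB hA hrank'
      (Measure.sum_smul_dirac_singleton_ne_zero_and_ne_top hbinj hβ)
      Measure.ae_mem_range_sum_smul_dirac hdisj.symm⟩

/-- If `μ = Σ αₙ δ_{aₙ}` and `ν = Σ βₙ δ_{bₙ}` (with `aₙ`, `bₙ` injective bounded
sequences with disjoint ranges, `αₙ, βₙ > 0` summable) and the multiplication operators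
`M_μ` on `L²(μ)` and `M_ν` on `L²(ν)` (characterized by `(M f)(t) = t·f(t)` a.e.) are
equivalent up to a rank one perturbation, then `{aₙ}` and `{bₙ}` are well-mixed. -/
theorem stmt16 (a b : ℕ → ℝ)
    (hainj : Function.Injective a) (hbinj : Function.Injective b)
    (hbdd : ∃ R : ℝ, (∀ n, |a n| ≤ R) ∧ (∀ n, |b n| ≤ R))
    (hdisj : Disjoint (Set.range a) (Set.range b))
    (α β : ℕ → NNReal) (hα : ∀ n, 0 < α n) (hβ : ∀ n, 0 < β n)
    (hαs : Summable α) (hβs : Summable β)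
    (μ ν : Measure ℝ)
    (hμ : μ = Measure.sum fun n => ((α n : ENNReal) • Measure.dirac (a n)))
    (hν : ν = Measure.sum fun n => ((β n : ENNReal) • Measure.dirac (b n)))
    (Mμ : Lp ℂ 2 μ →L[ℂ] Lp ℂ 2 μ)
    (hMμ : ∀ f : Lp ℂ 2 μ, ∀ᵐ (t : ℝ) ∂μ, (Mμ f) t = (t : ℂ) * f t)
    (Mν : Lp ℂ 2 ν →L[ℂ] Lp ℂ 2 ν)
    (hMν : ∀ f : Lp ℂ 2 ν, ∀ᵐ (t : ℝ) ∂ν, (Mν f) t = (t : ℂ) * f t)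
    (h : EquivUpToRankOne Mμ Mν) :
    WellMixed (Set.range a) (Set.range b) :=
  stmt16_general a b hainj hbinj hdisj α β hα hβ μ ν hμ hν Mμ hMμ Mν hMν h
end
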